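/- arXiv:1912.00814 — 2 statements merged into one kernel-verified Lean document; each statement's English description precedes it below -/
import Mathlib

section
/- Let D be a strongly connected orientation of a graph G with minimum degree at most three. Then the full vertex set is a line of D. -/
open scoped Classical

/-- `stepsTo A n u v` : there is a directed walk of length `n` from `u` to `v`
in the digraph with arc relation `A`. -/
def stepsTo {V : Type*} (A : V → V → Prop) : ℕ → V → V → Prop
  | 0, u, v => u = v
  | n+1, u, v => ∃ w, A u w ∧ stepsTo A n w v

/-- A digraph is strongly connected if every vertex is reachable from every vertex. -/
def StronglyConnected {V : Type*} (A : V → V → Prop) : Prop :=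
  ∀ u v : V, ∃ n : ℕ, stepsTo A n u v

/-- The directed distance: the length of a shortest directed path from `u` to `v`. -/
noncomputable def ddist {V : Type*} (A : V → V → Prop) (u v : V) : ℕ :=
  sInf {n : ℕ | stepsTo A n u v}

/-- `btw A u v z` means `z ∈ [u,v]`, i.e. `z` lies on a shortest dipath from `u` to `v`. -/
def btw {V : Type*} (A : V → V → Prop) (u v z : V) : Prop :=
  ddist A u v = ddist A u z + ddist A z v

/-- The line generated by the ordered pair `(u,v)`:
`{z : u ∈ [z,v] or v ∈ [u,z] or z ∈ [u,v]}`. -/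
def line {V : Type*} (A : V → V → Prop) (u v : V) : Set V :=
  {z | btw A z v u ∨ btw A u z v ∨ btw A u v z}

/-- `L(D)`: the set of all lines generated by ordered pairs of distinct vertices. -/
def lineSet {V : Type*} (A : V → V → Prop) : Set (Set V) :=
  {S | ∃ u v : V, u ≠ v ∧ S = line A u v}

section Aux

variable {V : Type*} {A : V → V → Prop}

lemma stepsTo_trans : ∀ {m n : ℕ} {u w v : V},
    stepsTo A m u w → stepsTo A n w v → stepsTo A (m + n) u v := by
  intro m
  induction m with
  | zero =>
    intro n u w v h1 h2
    have : u = w := h1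
    simpa [Nat.zero_add, this] using h2
  | succ m ih =>
    intro n u w v h1 h2
    obtain ⟨x, hx, hs⟩ := h1
    have : stepsTo A (m + n) x v := ih hs h2
    exact (by rw [Nat.succ_add]; exact ⟨x, hx, this⟩)

lemma ddist_le {n : ℕ} {u v : V} (h : stepsTo A n u v) : ddist A u v ≤ n :=
  Nat.sInf_le h

lemma stepsTo_ddist (hsc : StronglyConnected A) (u v : V) :
    stepsTo A (ddist A u v) u v :=
  Nat.sInf_mem (hsc u v)

lemma ddist_self (v : V) : ddist A v v = 0 :=
  Nat.le_zero.mp (ddist_le (show stepsTo A 0 v v from rfl))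

lemma eq_of_ddist_eq_zero (hsc : StronglyConnected A) {u v : V}
    (h : ddist A u v = 0) : u = v := by
  have := stepsTo_ddist hsc u v
  rw [h] at this
  exact this

lemma ddist_triangle (hsc : StronglyConnected A) (u w v : V) :
    ddist A u v ≤ ddist A u w + ddist A w v :=
  ddist_le (stepsTo_trans (stepsTo_ddist hsc u w) (stepsTo_ddist hsc w v))

lemma stepsTo_last : ∀ {n : ℕ} {u v : V}, stepsTo A (n + 1) u v →
    ∃ w, stepsTo A n u w ∧ A w v := by
  intro n
  induction n with
  | zero =>
    intro u v h
    obtain ⟨w, hw, h0⟩ := h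
    have : w = v := h0
    subst this
    exact ⟨u, rfl, hw⟩
  | succ n ih =>
    intro u v h
    obtain ⟨x, hx, hs⟩ := h
    obtain ⟨w, hw, haw⟩ := ih hs
    exact ⟨w, ⟨x, hx, hw⟩, haw⟩

end Aux

theorem stmt2 {V : Type*} [Fintype V] [Nontrivial V]
    (G : SimpleGraph V) (A : V → V → Prop)
    (horient : ∀ u v : V, G.Adj u v ↔ (A u v ∨ A v u))
    (hanti : ∀ u v : V, ¬ (A u v ∧ A v u))
    (hsc : StronglyConnected A)
    (hdeg : ∃ v : V, ({u | G.Adj v u}).ncard ≤ 3) :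
    (Set.univ : Set V) ∈ lineSet A := by
  obtain ⟨v, hv3⟩ := hdeg
  set Nin : Set V := {w | A w v} with hNin
  set Nout : Set V := {w | A v w} with hNout
  -- no self loops
  have hirr : ∀ x : V, ¬ A x x := fun x hx => hanti x x ⟨hx, hx⟩
  obtain ⟨z, hz⟩ := exists_ne v
  -- Nin nonempty
  have hNin_ne : Nin.Nonempty := by
    obtain ⟨n, hn⟩ := hsc z v
    clear hv3
    induction n generalizing z with
    | zero => exact absurd hn hz
    | succ n ih =>
      obtain ⟨w, hw, hs⟩ := stepsTo_last hn
      exact ⟨w, hs⟩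
  -- Nout nonempty
  have hNout_ne : Nout.Nonempty := by
    obtain ⟨n, hn⟩ := hsc v z
    cases n with
    | zero => exact absurd hn.symm hz
    | succ n =>
      obtain ⟨w, hw, _⟩ := hn
      exact ⟨w, hw⟩
  -- degree counting
  have hset : {u | G.Adj v u} = Nout ∪ Nin := by
    ext u
    simp only [Set.mem_setOf_eq, Set.mem_union, hNin, hNout, horient]
  have hdisj : Disjoint Nout Nin := by
    rw [Set.disjoint_left]
    intro x hx hx'
    exact hanti v x ⟨hx, hx'⟩
  have hfin1 : Nout.Finite := Set.toFinite _
  have hfin2 : Nin.Finite := Set.toFinite _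
  have hcard : Nout.ncard + Nin.ncard ≤ 3 := by
    rw [← Set.ncard_union_eq hdisj hfin1 hfin2, ← hset]
    exact hv3
  have hin_pos : 0 < Nin.ncard := (Set.ncard_pos hfin2).mpr hNin_ne
  have hout_pos : 0 < Nout.ncard := (Set.ncard_pos hfin1).mpr hNout_ne
  have hone : Nin.ncard = 1 ∨ Nout.ncard = 1 := by omega
  rcases hone with h1 | h1
  · -- unique in-neighbor a
    obtain ⟨a, ha⟩ := Set.ncard_eq_one.mp h1
    have hav : A a v := by
      have : a ∈ Nin := by rw [ha]; exact rfl
      exact this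
    have huniq : ∀ w, A w v → w = a := by
      intro w hw
      have : w ∈ Nin := hw
      rw [ha] at this
      exact this
    have hane : a ≠ v := by
      rintro rfl
      exact hirr a hav
    have d_av : ddist A a v = 1 := by
      have h1' : stepsTo A 1 a v := ⟨v, hav, rfl⟩
      have hle := ddist_le h1'
      have hne0 : ddist A a v ≠ 0 := fun h => hane (eq_of_ddist_eq_zero hsc h)
      omega
    have key : ∀ z : V, z ≠ v → ddist A z v = ddist A z a + 1 := by
      intro z hzv
      have hle : ddist A z v ≤ ddist A z a + 1 := by
        have := ddist_triangle hsc z a v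
        rw [d_av] at this
        exact this
      have hne0 : ddist A z v ≠ 0 := fun h => hzv (eq_of_ddist_eq_zero hsc h)
      obtain ⟨m, hm⟩ : ∃ m, ddist A z v = m + 1 :=
        ⟨ddist A z v - 1, by omega⟩
      have hst : stepsTo A (m + 1) z v := hm ▸ stepsTo_ddist hsc z v
      obtain ⟨w, hw, hwv⟩ := stepsTo_last hst
      have hwa : w = a := huniq w hwv
      rw [hwa] at hw
      have : ddist A z a ≤ m := ddist_le hw
      omega
    refine ⟨a, v, hane, ?_⟩
    symm
    rw [Set.eq_univ_iff_forall]
    intro x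
    by_cases hx : x = v
    · exact Or.inr (Or.inr (show ddist A a v = ddist A a x + ddist A x v by
        subst hx; rw [ddist_self]; omega))
    · exact Or.inl (show ddist A x v = ddist A x a + ddist A a v by
        rw [d_av, key x hx])
  · -- unique out-neighbor b
    obtain ⟨b, hb⟩ := Set.ncard_eq_one.mp h1
    have hvb : A v b := by
      have : b ∈ Nout := by rw [hb]; exact rfl
      exact this
    have huniq : ∀ w, A v w → w = b := by
      intro w hw
      have : w ∈ Nout := hw
      rw [hb] at this
      exact this
    have hbne : v ≠ b := by
      rintro rfl
      exact hirr v hvb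
    have d_vb : ddist A v b = 1 := by
      have h1' : stepsTo A 1 v b := ⟨b, hvb, rfl⟩
      have hle := ddist_le h1'
      have hne0 : ddist A v b ≠ 0 := fun h => hbne (eq_of_ddist_eq_zero hsc h)
      omega
    have key : ∀ z : V, z ≠ v → ddist A v z = 1 + ddist A b z := by
      intro z hzv
      have hle : ddist A v z ≤ 1 + ddist A b z := by
        have := ddist_triangle hsc v b z
        rw [d_vb] at this
        exact this
      have hne0 : ddist A v z ≠ 0 := fun h => hzv (eq_of_ddist_eq_zero hsc h).symm
      obtain ⟨m, hm⟩ : ∃ m, ddist A v z = m + 1 :=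
        ⟨ddist A v z - 1, by omega⟩
      have hst : stepsTo A (m + 1) v z := hm ▸ stepsTo_ddist hsc v z
      obtain ⟨w, hw, hws⟩ := hst
      have hwb : w = b := huniq w hw
      rw [hwb] at hws
      have : ddist A b z ≤ m := ddist_le hws
      omega
    refine ⟨v, b, hbne, ?_⟩
    symm
    rw [Set.eq_univ_iff_forall]
    intro x
    by_cases hx : x = v
    · exact Or.inr (Or.inr (show ddist A v b = ddist A v x + ddist A x b by
        subst hx; rw [ddist_self]; omega))
    · exact Or.inr (Or.inl (show ddist A v x = ddist A v b + ddist A b x by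
        rw [d_vb, key x hx]))
end

section
/- Let D be a strongly connected tournament, a a vertex, x ∈ a⁺ and y ∈ a⁻ with line(a,x) = line(y,a). Then a⁺ ∩ y⁻ \ {x} ⊆ x⁺, i.e., every out-neighbor of a (other than x) that is an in-neighbor of y is an out-neighbor of x. -/
open scoped Classical

lemma stepsTo_one' {V : Type*} {A : V → V → Prop} {u v : V} (h : A u v) : stepsTo A 1 u v :=
  ⟨v, h, rfl⟩

lemma ddist_mem' {V : Type*} {A : V → V → Prop} (hsc : StronglyConnected A) (u v : V) :
    stepsTo A (ddist A u v) u v :=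
  Nat.sInf_mem (hsc u v)

lemma ddist_eq_zero_imp' {V : Type*} {A : V → V → Prop} (hsc : StronglyConnected A) {u v : V}
    (h : ddist A u v = 0) : u = v := by
  have h2 := ddist_mem' hsc u v
  rw [h] at h2
  exact h2

lemma ddist_eq_one' {V : Type*} {A : V → V → Prop} (hsc : StronglyConnected A) {u v : V}
    (h : A u v) (hne : u ≠ v) : ddist A u v = 1 := by
  have hle : ddist A u v ≤ 1 := Nat.sInf_le (stepsTo_one' h)
  have h0 : ddist A u v ≠ 0 := fun h0 => hne (ddist_eq_zero_imp' hsc h0)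
  omega

lemma ddist_eq_two' {V : Type*} {A : V → V → Prop} (hsc : StronglyConnected A) {u v w : V}
    (h1 : A u w) (h2 : A w v) (hne : u ≠ v) (hnA : ¬ A u v) : ddist A u v = 2 := by
  have hle : ddist A u v ≤ 2 := Nat.sInf_le ⟨w, h1, stepsTo_one' h2⟩
  have h0 : ddist A u v ≠ 0 := fun h0 => hne (ddist_eq_zero_imp' hsc h0)
  have h1' : ddist A u v ≠ 1 := by
    intro he
    have hm := ddist_mem' hsc u v
    rw [he] at hm
    obtain ⟨w', hw', heq⟩ := hm
    exact hnA (heq ▸ hw')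
  omega

theorem stmt10 {V : Type*} [Fintype V] (A : V → V → Prop)
    (hanti : ∀ u v : V, ¬ (A u v ∧ A v u))
    (hcomp : ∀ u v : V, u ≠ v → A u v ∨ A v u)
    (hsc : StronglyConnected A)
    (a x y : V) (hx : A a x) (hy : A y a) (hrep : line A a x = line A y a) :
    ∀ z : V, A a z → A z y → z ≠ x → A x z := by
  intro z haz hzy hzx
  have irr : ∀ u : V, ¬ A u u := fun u h => hanti u u ⟨h, h⟩
  by_contra hxz
  have hzx' : A z x := (hcomp z x hzx).resolve_right hxz
  have hax : a ≠ x := fun h => irr x (h ▸ hx)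
  have hza : z ≠ a := fun h => irr a (h ▸ haz)
  have hzy' : z ≠ y := fun h => irr y (h ▸ hzy)
  have hya : y ≠ a := fun h => irr a (h ▸ hy)
  have hnza : ¬ A z a := fun h => hanti a z ⟨haz, h⟩
  have d1 : ddist A a x = 1 := ddist_eq_one' hsc hx hax
  have d2 : ddist A z x = 1 := ddist_eq_one' hsc hzx' hzx
  have d3 : ddist A a z = 1 := ddist_eq_one' hsc haz (Ne.symm hza)
  have d4 : ddist A z y = 1 := ddist_eq_one' hsc hzy hzy'
  have d5 : ddist A y a = 1 := ddist_eq_one' hsc hy hya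
  have d6 : ddist A z a = 2 := ddist_eq_two' hsc hzy hy hza hnza
  have hz_in : z ∈ line A y a := by
    left
    show ddist A z a = ddist A z y + ddist A y a
    rw [d6, d4, d5]
  rw [← hrep] at hz_in
  rcases hz_in with h | h | h
  · unfold _root_.btw at h
    rw [d2, d6, d1] at h
    omega
  · unfold _root_.btw at h
    rw [d3, d1] at h
    have hxz0 : ddist A x z = 0 := by omega
    exact hzx (ddist_eq_zero_imp' hsc hxz0).symm
  · unfold _root_.btw at h
    rw [d1, d3, d2] at h
    omega
end
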